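/- In the Markov-modulated setting with |S|>1, suppose P_π(A_1=0)=0. Then: (a) if P_i(B_1^i=0)=1 for some i∈S, the degeneracy condition (D) holds, i.e. there exist constants c_j∈R, j∈S, with P_π(A_1c_{M_1}+B_1=c_{M_0})=1; (b) if P_i(B_1^i=0)=1 for all i∈S, then P_π(B_1=0)=1 or P_i(A_1^i=1)=1 for all i∈S. -/

import Mathlib

open MeasureTheory ProbabilityTheory Filter
open scoped ENNReal NNReal Topology

noncomputable section

namespace Perpetuities

/-- The positive part of the logarithm, with the convention `log⁺ 0 = 0`. -/
def logplus (x : ℝ) : ℝ := max (Real.log x) 0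

/-- Weak convergence of a sequence of (probability) measures on `ℝ`. -/
def WeakLim (μ : ℕ → Measure ℝ) (ν : Measure ℝ) : Prop :=
  ∀ f : BoundedContinuousFunction ℝ ℝ,
    Tendsto (fun n => ∫ x, f x ∂ μ n) atTop (nhds (∫ x, f x ∂ ν))

/-- `|f n| → ∞` in `μ`-probability. -/
def TendstoInfInMeasure {Ω : Type*} [MeasurableSpace Ω] (μ : Measure Ω) (f : ℕ → Ω → ℝ) : Prop :=
  ∀ x : ℝ, 0 < x → Tendsto (fun n => μ {ω | |f n ω| ≤ x}) atTop (nhds 0)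

/-- `d` is the lattice span (period) of the distribution of the `ℕ`-valued random
variable `T` under `μ`, i.e. `d` is the greatest common divisor of the support. -/
def LatticeSpan {Ω : Type*} [MeasurableSpace Ω] (μ : Measure Ω) (T : Ω → ℕ) (d : ℕ) : Prop :=
  (∀ n, 0 < μ {ω | T ω = n} → d ∣ n) ∧ ∀ e : ℕ, (∀ n, 0 < μ {ω | T ω = n} → e ∣ n) → e ∣ d

/-- The Markov-modulated setting: an ergodic (irreducible, aperiodic, positive recurrent)
Markov chain `M` on a countable state space `S` with transition matrix `p` and stationary
distribution `π`, modulating a sequence `(A_n, B_n)_{n ≥ 1}` of real random pairs (indexed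
here so that `A n`, `B n` are the paper's `A_{n+1}`, `B_{n+1}`): conditionally on the whole
path of the chain, the pairs are independent and the conditional law of `(A_{n+1}, B_{n+1})`
given the path depends only on `(M_n, M_{n+1})`, via the stochastic kernel `K`.
`P i` is the underlying probability measure conditioned on `M 0 = i`. -/
structure MMSetting (S : Type*) (Ω : Type*) [MeasurableSpace S] [MeasurableSingletonClass S]
    [Countable S] [MeasurableSpace Ω] where
  P : S → Measure Ω
  prob : ∀ i, IsProbabilityMeasure (P i)
  π : S → ℝ≥0∞
  πsum : ∑' i, π i = 1
  πpos : ∀ i, 0 < π i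
  p : S → S → ℝ≥0∞
  psum : ∀ i, ∑' j, p i j = 1
  stationary : ∀ j, ∑' i, π i * p i j = π j
  K : S → S → Measure (ℝ × ℝ)
  Kprob : ∀ i j, IsProbabilityMeasure (K i j)
  M : ℕ → Ω → S
  A : ℕ → Ω → ℝ
  B : ℕ → Ω → ℝ
  measM : ∀ n, Measurable (M n)
  measA : ∀ n, Measurable (A n)
  measB : ∀ n, Measurable (B n)
  start : ∀ i, P i {ω | M 0 ω = i} = 1
  chain : ∀ (i : S) (n : ℕ) (path : ℕ → S), path 0 = i →
    P i (⋂ k ∈ Finset.range (n + 1), {ω | M k ω = path k})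
      = ∏ k ∈ Finset.range n, p (path k) (path (k + 1))
  modulated : ∀ (i : S) (n : ℕ) (path : ℕ → S) (E : ℕ → Set (ℝ × ℝ)), path 0 = i →
    (∀ k, MeasurableSet (E k)) →
    P i ((⋂ k ∈ Finset.range (n + 1), {ω | M k ω = path k}) ∩
        ⋂ k ∈ Finset.range n, {ω | (A k ω, B k ω) ∈ E k})
      = P i (⋂ k ∈ Finset.range (n + 1), {ω | M k ω = path k})
        * ∏ k ∈ Finset.range n, K (path k) (path (k + 1)) (E k)
  irreducible : ∀ i j, ∃ n, 0 < P i {ω | M n ω = j}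
  recurrent : ∀ i, P i {ω | ∃ n, 0 < n ∧ M n ω = i} = 1
  posRecurrent : ∀ i, ∫⁻ ω, ((sInf {n | 0 < n ∧ M n ω = i} : ℕ) : ℝ≥0∞) ∂ P i < ⊤
  aperiodic : ∀ (i : S) (d : ℕ), (∀ n, 0 < n → 0 < P i {ω | M n ω = i} → d ∣ n) → d = 1

namespace MMSetting

variable {S : Type*} [MeasurableSpace S] [MeasurableSingletonClass S] [Countable S]
variable {Ω : Type*} [MeasurableSpace Ω]
variable (X : MMSetting S Ω)

/-- `Pπ = ∑ i, π i • P i`, the stationary (unconditional) probability measure. -/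
def Pπ : Measure Ω := Measure.sum fun i => X.π i • X.P i

/-- `Pprod n = Π_n = A_1 ⋯ A_n`, with `Π_0 = 1`. -/
def Pprod (n : ℕ) (ω : Ω) : ℝ := ∏ k ∈ Finset.range n, X.A k ω

/-- `Ssum n = ∑_{k=1}^n Π_{k-1} B_k`, the value `Ψ_1 ∘ ⋯ ∘ Ψ_n (0)` of the backward
iteration started at `0`. -/
def Ssum (n : ℕ) (ω : Ω) : ℝ := ∑ k ∈ Finset.range n, X.Pprod k ω * X.B k ω

/-- `Zb Z n = Ψ_1 ∘ ⋯ ∘ Ψ_n (Z) = Π_n Z + ∑_{k=1}^n Π_{k-1} B_k`, the backward iteration. -/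
def Zb (Z : Ω → ℝ) (n : ℕ) (ω : Ω) : ℝ := X.Pprod n ω * Z ω + X.Ssum n ω

/-- `Zf Z n = Ψ_n ∘ ⋯ ∘ Ψ_1 (Z)`, the forward iteration. -/
def Zf (Z : Ω → ℝ) : ℕ → Ω → ℝ
  | 0 => Z
  | n + 1 => fun ω => X.A n ω * Zf Z n ω + X.B n ω

/-- The perpetuity `Z_∞ = ∑_{n ≥ 1} Π_{n-1} B_n`. -/
def Zinf (ω : Ω) : ℝ := ∑' n, X.Pprod n ω * X.B n ω

/-- `tau i n = τ_n(i)`, the `n`-th return time of the driving chain to the state `i`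
(`τ_0(i) = 0`). -/
def tau (i : S) : ℕ → Ω → ℕ
  | 0 => fun _ => 0
  | n + 1 => fun ω => sInf {k | tau i n ω < k ∧ X.M k ω = i}

/-- `A_1^i = Π_{τ(i)}`. -/
def Ai (i : S) (ω : Ω) : ℝ := X.Pprod (X.tau i 1 ω) ω

/-- `B_1^i = ∑_{k=1}^{τ(i)} Π_{k-1} B_k`. -/
def Bi (i : S) (ω : Ω) : ℝ := X.Ssum (X.tau i 1 ω) ω

/-- `W^i = max_{1 ≤ k ≤ τ(i)} |Π_{k-1} B_k|`. -/
def Wi (i : S) (ω : Ω) : ℝ :=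
  (((Finset.range (X.tau i 1 ω)).sup fun k => ‖X.Pprod k ω * X.B k ω‖₊ : ℝ≥0) : ℝ)

/-- `S_{τ(i)} = - log |Π_{τ(i)}|`. -/
def Stau (i : S) (ω : Ω) : ℝ := - Real.log |X.Ai i ω|

/-- The function `J_i`: `J_i(0) = 1`, and for `x > 0`, `J_i(x) = x / E_i (S_{τ(i)}⁺ ∧ x)`
if `P_i(S_{τ(i)} ≤ 0) < 1`, and `J_i(x) = x` otherwise. -/
def Ji (i : S) (x : ℝ) : ℝ :=
  if x = 0 then 1
  else if X.P i {ω | X.Stau i ω ≤ 0} < 1 then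
    x / ∫ ω, min (max (X.Stau i ω) 0) x ∂ X.P i
  else x

/-- `τ̂(i) = inf {k ≥ 1 : M_k = i, Π_k = 1}`. -/
def hatτ (i : S) (ω : Ω) : ℕ := sInf {k | 0 < k ∧ X.M k ω = i ∧ X.Pprod k ω = 1}

/-- `Z` is an admissible initial value: it is (conditionally on `M 0`, i.e. under each `P i`)
independent of the modulated sequence `(M_n, A_n, B_n)_{n ≥ 1}`. -/
def Admissible (Z : Ω → ℝ) : Prop :=
  Measurable Z ∧
    ∀ i : S, IndepFun Z (fun ω => fun n : ℕ => (X.M (n + 1) ω, X.A n ω, X.B n ω)) (X.P i)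

/-- The degeneracy condition: `A_1 c_{M_1} + B_1 = c_{M_0}` a.s. for the family `c`. -/
def DegenD (c : S → ℝ) : Prop :=
  ∀ᵐ ω ∂ X.Pπ, X.A 0 ω * c (X.M 1 ω) + X.B 0 ω = c (X.M 0 ω)

/-- The dual degeneracy condition: `A_1 c_{M_0} + B_1 = c_{M_1}` a.s. for the family `c`. -/
def DegenDdual (c : S → ℝ) : Prop :=
  ∀ᵐ ω ∂ X.Pπ, X.A 0 ω * c (X.M 0 ω) + X.B 0 ω = c (X.M 1 ω)

end MMSetting

end Perpetuities

/-!
Fix `b` with `B^b_1 = 0` a.s. Given the path of the chain, the pairs `(A_k, B_k)` are independent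
with laws given by `K`, so splitting a cycle at `b` at its first return shows by induction that
the increment `∑ Π_{k-1} B_k` along every cycle at `b` vanishes a.s. Prefixing a path `b → j` to a
path `j → b` gives a cycle whose two pieces are independent; as `A ≠ 0` a.s., the increment along
any path `j → b` is then a.s. a constant `c_j`. Comparing the paths `j → k → ⋯ → b` and
`k → ⋯ → b` gives `A c_k + B = c_j` on every transition `j → k`, which is (D).

For (b), a solution `c ≡ 0` of (D) means `B = 0`. Otherwise `c_l ≠ 0` for some `l`, while the
solution `c'` built from `l` has `c'_l = 0`; the difference `c - c'` solves `A e_{M_1} = e_{M_0}`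
and vanishes nowhere, which forces `Π_{τ(i)} = 1` along every cycle at `i`.
-/

namespace Perpetuities

section ProductMeasure

variable {α β : Type*} [MeasurableSpace α] [MeasurableSpace β] {μ : Measure α} {ν : Measure β}

lemma ae_of_ae_prod_fst [SFinite ν] [NeZero ν] {p : α → Prop}
    (h : ∀ᵐ z ∂μ.prod ν, p z.1) : ∀ᵐ x ∂μ, p x := by
  filter_upwards [Measure.ae_ae_of_ae_prod h] with x hx
  exact hx.exists.choose_spec

lemma exists_ae_eq_const_of_ae_prod [NeZero μ] [SFinite ν] [NeZero ν]
    {f : α → ℝ} {g : β → ℝ} (h : ∀ᵐ z ∂μ.prod ν, g z.2 = f z.1) :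
    ∃ r : ℝ, (∀ᵐ x ∂μ, f x = r) ∧ ∀ᵐ y ∂ν, g y = r := by
  have h' := Measure.ae_ae_of_ae_prod h
  obtain ⟨x₀, hx₀⟩ := h'.exists
  refine ⟨f x₀, ?_, hx₀⟩
  filter_upwards [h'] with x hx
  obtain ⟨y, hyx, hyx₀⟩ := (hx.and hx₀).exists
  rw [← hyx, hyx₀]

end ProductMeasure

lemma measurable_sInf_setOf_nat {Ω : Type*} [MeasurableSpace Ω] {p : Ω → ℕ → Prop}
    (hp : ∀ k, MeasurableSet {ω | p ω k}) : Measurable fun ω => sInf {k | p ω k} := by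
  refine measurable_to_countable' fun n => ?_
  have : (fun ω => sInf {k | p ω k}) ⁻¹' {n}
      = ({ω | p ω n} ∩ ⋂ k < n, {ω | p ω k}ᶜ) ∪ {_ω | n = 0} ∩ ⋂ k, {ω | p ω k}ᶜ := by
    ext ω
    simp only [Set.mem_preimage, Set.mem_singleton_iff, Set.mem_union, Set.mem_inter_iff,
      Set.mem_iInter, Set.mem_compl_iff]
    constructor
    · rintro rfl
      by_cases hne : {k | p ω k}.Nonempty
      · exact Or.inl ⟨Nat.sInf_mem hne, fun k hk => Nat.notMem_of_lt_sInf hk⟩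
      · rw [Set.not_nonempty_iff_eq_empty.mp hne, Nat.sInf_empty]
        exact Or.inr ⟨rfl, fun k hk => hne ⟨k, hk⟩⟩
    · rintro (⟨hn, hlt⟩ | ⟨rfl, hnone⟩)
      · exact le_antisymm (Nat.sInf_le hn)
          (le_csInf ⟨n, hn⟩ fun k hk => not_lt.mp fun h => hlt k h hk)
      · simp_all
  rw [this]
  exact .union (.inter (hp n) (.iInter fun k => .iInter fun _ => (hp k).compl))
    (.inter (.const _) (.iInter fun k => (hp k).compl))

section Sequences

/-- `partialProd n z` and `partialPerp n z` are the slope and the intercept of the affine map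
`ψ₀ ∘ ⋯ ∘ ψ_{n-1}`, where `ψ_k x = (z k).1 * x + (z k).2`. -/
def partialProd (n : ℕ) (z : ℕ → ℝ × ℝ) : ℝ := ∏ k ∈ Finset.range n, (z k).1

def partialPerp (n : ℕ) (z : ℕ → ℝ × ℝ) : ℝ :=
  ∑ k ∈ Finset.range n, partialProd k z * (z k).2

lemma partialProd_congr {n : ℕ} {z z' : ℕ → ℝ × ℝ} (h : ∀ k < n, z k = z' k) :
    partialProd n z = partialProd n z' :=
  Finset.prod_congr rfl fun k hk => by rw [h k (Finset.mem_range.mp hk)]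

lemma partialPerp_congr {n : ℕ} {z z' : ℕ → ℝ × ℝ} (h : ∀ k < n, z k = z' k) :
    partialPerp n z = partialPerp n z' := by
  refine Finset.sum_congr rfl fun k hk => ?_
  have hk := Finset.mem_range.mp hk
  rw [h k hk, partialProd_congr fun l hl => h l (hl.trans hk)]

lemma partialProd_add (m r : ℕ) (z : ℕ → ℝ × ℝ) :
    partialProd (m + r) z = partialProd m z * partialProd r (fun k => z (m + k)) :=
  Finset.prod_range_add _ m r

lemma partialPerp_add (m r : ℕ) (z : ℕ → ℝ × ℝ) :
    partialPerp (m + r) z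
      = partialPerp m z + partialProd m z * partialPerp r (fun k => z (m + k)) := by
  rw [partialPerp, Finset.sum_range_add, ← partialPerp]
  congr 1
  rw [partialPerp, Finset.mul_sum]
  exact Finset.sum_congr rfl fun k _ => by rw [partialProd_add m k z]; ring

lemma measurable_partialProd (n : ℕ) : Measurable (partialProd n) :=
  Finset.measurable_prod _ fun k _ => (measurable_pi_apply k).fst

lemma measurable_partialPerp (n : ℕ) : Measurable (partialPerp n) :=
  Finset.measurable_sum _ fun k _ => (measurable_partialProd k).mul (measurable_pi_apply k).snd

end Sequences

section Tuples

def extendTuple {n : ℕ} (x : Fin n → ℝ × ℝ) (k : ℕ) : ℝ × ℝ :=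
  if h : k < n then x ⟨k, h⟩ else (1, 0)

def tupleProd (n : ℕ) (x : Fin n → ℝ × ℝ) : ℝ := partialProd n (extendTuple x)

def tuplePerp (n : ℕ) (x : Fin n → ℝ × ℝ) : ℝ := partialPerp n (extendTuple x)

lemma extendTuple_of_lt {n : ℕ} (x : Fin n → ℝ × ℝ) {k : ℕ} (h : k < n) :
    extendTuple x k = x ⟨k, h⟩ :=
  dif_pos h

lemma measurable_extendTuple {n : ℕ} : Measurable (fun x : Fin n → ℝ × ℝ => extendTuple x) := by
  refine measurable_pi_lambda _ fun k => ?_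
  by_cases h : k < n
  · simpa [extendTuple, h] using measurable_pi_apply (⟨k, h⟩ : Fin n)
  · simp [extendTuple, h]

lemma measurable_tupleProd (n : ℕ) : Measurable (tupleProd n) :=
  (measurable_partialProd n).comp measurable_extendTuple

lemma measurable_tuplePerp (n : ℕ) : Measurable (tuplePerp n) :=
  (measurable_partialPerp n).comp measurable_extendTuple

@[simp] lemma tupleProd_zero (x : Fin 0 → ℝ × ℝ) : tupleProd 0 x = 1 := by
  simp [tupleProd, partialProd]

@[simp] lemma tuplePerp_zero (x : Fin 0 → ℝ × ℝ) : tuplePerp 0 x = 0 := by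
  simp [tuplePerp, partialPerp]

@[simp] lemma tupleProd_one (x : Fin 1 → ℝ × ℝ) : tupleProd 1 x = (x 0).1 := by
  simp [tupleProd, partialProd, extendTuple]

@[simp] lemma tuplePerp_one (x : Fin 1 → ℝ × ℝ) : tuplePerp 1 x = (x 0).2 := by
  simp [tuplePerp, partialPerp, partialProd, extendTuple]

lemma extendTuple_append_left {m r : ℕ} (x : Fin m → ℝ × ℝ) (y : Fin r → ℝ × ℝ) {k : ℕ}
    (hk : k < m) : extendTuple (Fin.append x y) k = extendTuple x k := by
  rw [extendTuple_of_lt _ (by omega), extendTuple_of_lt _ hk]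
  exact Fin.append_left x y ⟨k, hk⟩

lemma extendTuple_append_right {m r : ℕ} (x : Fin m → ℝ × ℝ) (y : Fin r → ℝ × ℝ) {k : ℕ}
    (hk : k < r) : extendTuple (Fin.append x y) (m + k) = extendTuple y k := by
  rw [extendTuple_of_lt _ (by omega), extendTuple_of_lt _ hk]
  exact Fin.append_right x y ⟨k, hk⟩

lemma tupleProd_append {m r : ℕ} (x : Fin m → ℝ × ℝ) (y : Fin r → ℝ × ℝ) :
    tupleProd (m + r) (Fin.append x y) = tupleProd m x * tupleProd r y := by
  rw [tupleProd, partialProd_add, partialProd_congr fun k hk => extendTuple_append_left x y hk,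
    partialProd_congr fun k hk => extendTuple_append_right x y hk]
  rfl

lemma tuplePerp_append {m r : ℕ} (x : Fin m → ℝ × ℝ) (y : Fin r → ℝ × ℝ) :
    tuplePerp (m + r) (Fin.append x y) = tuplePerp m x + tupleProd m x * tuplePerp r y := by
  rw [tuplePerp, partialPerp_add, partialPerp_congr fun k hk => extendTuple_append_left x y hk,
    partialProd_congr fun k hk => extendTuple_append_left x y hk,
    partialPerp_congr fun k hk => extendTuple_append_right x y hk]
  rfl

def appendEquiv (m r : ℕ) : ((Fin m → ℝ × ℝ) × (Fin r → ℝ × ℝ)) ≃ᵐ (Fin (m + r) → ℝ × ℝ) :=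
  (MeasurableEquiv.sumPiEquivProdPi fun _ : Fin m ⊕ Fin r => ℝ × ℝ).symm.trans
    (MeasurableEquiv.piCongrLeft (fun _ : Fin (m + r) => ℝ × ℝ) finSumFinEquiv)

lemma appendEquiv_apply {m r : ℕ} (q : (Fin m → ℝ × ℝ) × (Fin r → ℝ × ℝ)) :
    appendEquiv m r q = Fin.append q.1 q.2 := by
  ext k : 1
  refine Fin.addCases (fun k => ?_) (fun k => ?_) k
  · simp only [Fin.append_left]
    exact Equiv.piCongrLeft_apply_apply (fun _ => ℝ × ℝ) finSumFinEquiv _ (Sum.inl k)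
  · simp only [Fin.append_right]
    exact Equiv.piCongrLeft_apply_apply (fun _ => ℝ × ℝ) finSumFinEquiv _ (Sum.inr k)

lemma measurePreserving_appendEquiv (μ : ℕ → Measure (ℝ × ℝ)) [∀ k, SigmaFinite (μ k)]
    (m r : ℕ) :
    MeasurePreserving (appendEquiv m r)
      ((Measure.pi fun k : Fin m => μ k).prod (Measure.pi fun k : Fin r => μ (m + k)))
      (Measure.pi fun k : Fin (m + r) => μ k) := by
  set ν : Fin m ⊕ Fin r → Measure (ℝ × ℝ) := Sum.elim (fun k => μ k) (fun k => μ (m + k))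
  have : ∀ s, SigmaFinite (ν s) := by rintro (k | k) <;> dsimp [ν] <;> infer_instance
  have hν : (Measure.pi fun s => μ (finSumFinEquiv s : ℕ)) = Measure.pi ν := by
    congr 1
    funext s
    cases s <;> simp [ν]
  have h := measurePreserving_piCongrLeft (fun k : Fin (m + r) => μ k) finSumFinEquiv
  rw [hν] at h
  exact h.comp (measurePreserving_sumPiEquivProdPi_symm ν)

end Tuples

section Paths

variable {S : Type*}

def edgePath (j k : S) : ℕ → S := fun t => if t = 0 then j else k

def pathAppend (ρ : ℕ → S) (m : ℕ) (δ : ℕ → S) : ℕ → S :=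
  fun k => if k < m then ρ k else δ (k - m)

lemma pathAppend_of_le {ρ δ : ℕ → S} {m k : ℕ} (hρδ : ρ m = δ 0) (hk : k ≤ m) :
    pathAppend ρ m δ k = ρ k := by
  rcases hk.lt_or_eq with hk | rfl
  · simp [pathAppend, hk]
  · simp [pathAppend, hρδ]

lemma pathAppend_add (ρ : ℕ → S) (m : ℕ) (δ : ℕ → S) (k : ℕ) :
    pathAppend ρ m δ (m + k) = δ k := by
  simp [pathAppend]

end Paths

namespace MMSetting

variable {S : Type*} [MeasurableSpace S] [MeasurableSingletonClass S] [Countable S]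
variable {Ω : Type*} [MeasurableSpace Ω]

lemma nonempty_state (X : MMSetting S Ω) : Nonempty S := by
  by_contra h
  simpa [not_nonempty_iff.mp h] using X.πsum

variable (X : MMSetting S Ω)

instance (i : S) : IsProbabilityMeasure (X.P i) := X.prob i

instance (i j : S) : IsProbabilityMeasure (X.K i j) := X.Kprob i j

def cyl (γ : ℕ → S) (n : ℕ) : Set Ω := ⋂ k ∈ Finset.range (n + 1), {ω | X.M k ω = γ k}

def PosPath (γ : ℕ → S) (n : ℕ) : Prop := ∀ k < n, 0 < X.p (γ k) (γ (k + 1))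

/-- The law of the first `n` pairs `(A, B)` given that the chain follows `γ`. -/
def pathLaw (γ : ℕ → S) (n : ℕ) : Measure (Fin n → ℝ × ℝ) :=
  Measure.pi fun k : Fin n => X.K (γ k) (γ (k + 1))

def steps (n : ℕ) (ω : Ω) : Fin n → ℝ × ℝ := fun k => (X.A k ω, X.B k ω)

instance (γ : ℕ → S) (n : ℕ) : IsProbabilityMeasure (X.pathLaw γ n) := by
  unfold pathLaw; infer_instance

lemma mem_cyl {γ : ℕ → S} {n : ℕ} {ω : Ω} : ω ∈ X.cyl γ n ↔ ∀ k ≤ n, X.M k ω = γ k := by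
  simp [cyl]

lemma measurable_steps (n : ℕ) : Measurable (X.steps n) :=
  measurable_pi_lambda _ fun k => (X.measA k).prodMk (X.measB k)

lemma measure_cyl {γ : ℕ → S} {i : S} (hγ : γ 0 = i) (n : ℕ) :
    X.P i (X.cyl γ n) = ∏ k ∈ Finset.range n, X.p (γ k) (γ (k + 1)) :=
  X.chain i n γ hγ

lemma measure_cyl_inter_steps_pi {γ : ℕ → S} {i : S} (hγ : γ 0 = i) {n : ℕ}
    {s : Fin n → Set (ℝ × ℝ)} (hs : ∀ k, MeasurableSet (s k)) :
    X.P i (X.cyl γ n ∩ X.steps n ⁻¹' Set.univ.pi s)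
      = X.P i (X.cyl γ n) * ∏ k : Fin n, X.K (γ k) (γ (k + 1)) (s k) := by
  set E : ℕ → Set (ℝ × ℝ) := fun k => if h : k < n then s ⟨k, h⟩ else Set.univ
  have hE : ∀ k, MeasurableSet (E k) := fun k => by
    by_cases h : k < n <;> simp [E, h, hs]
  have hpre : X.steps n ⁻¹' Set.univ.pi s
      = ⋂ k ∈ Finset.range n, {ω | (X.A k ω, X.B k ω) ∈ E k} := by
    ext ω
    simp only [Set.mem_preimage, Set.mem_univ_pi, Set.mem_iInter, Finset.mem_range]
    exact ⟨fun h k hk => by simpa [E, hk, steps] using h ⟨k, hk⟩,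
      fun h k => by simpa [E, steps] using h k k.2⟩
  rw [hpre, cyl, X.modulated i n γ E hγ hE, ← Fin.prod_univ_eq_prod_range]
  simp [E]

lemma map_steps_restrict_cyl {γ : ℕ → S} {i : S} (hγ : γ 0 = i) (n : ℕ) :
    ((X.P i).restrict (X.cyl γ n)).map (X.steps n) = X.P i (X.cyl γ n) • X.pathLaw γ n := by
  refine ext_of_generate_finite _ generateFrom_pi.symm isPiSystem_pi ?_ ?_
  · rintro _ ⟨s, hs, rfl⟩
    replace hs : ∀ k, MeasurableSet (s k) := fun k => hs k (Set.mem_univ k)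
    rw [Measure.map_apply (X.measurable_steps n) (.univ_pi hs),
      Measure.restrict_apply (X.measurable_steps n (.univ_pi hs)), Set.inter_comm,
      X.measure_cyl_inter_steps_pi hγ hs, Measure.smul_apply, pathLaw, Measure.pi_pi, smul_eq_mul]
  · simp [Measure.map_apply (X.measurable_steps n) .univ]

lemma measure_cyl_inter_steps_preimage {γ : ℕ → S} {i : S} (hγ : γ 0 = i) {n : ℕ}
    {E : Set (Fin n → ℝ × ℝ)} (hE : MeasurableSet E) :
    X.P i (X.cyl γ n ∩ X.steps n ⁻¹' E) = X.P i (X.cyl γ n) * X.pathLaw γ n E := by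
  have h := congrArg (· E) (X.map_steps_restrict_cyl hγ n)
  simp only [Measure.map_apply (X.measurable_steps n) hE,
    Measure.restrict_apply (X.measurable_steps n hE), Measure.smul_apply, smul_eq_mul] at h
  rwa [Set.inter_comm]

lemma measure_cyl_ne_zero {γ : ℕ → S} {i : S} (hγ : γ 0 = i) {n : ℕ} (hpos : X.PosPath γ n) :
    X.P i (X.cyl γ n) ≠ 0 := by
  rw [X.measure_cyl hγ]
  exact Finset.prod_ne_zero_iff.mpr fun k hk => (hpos k (Finset.mem_range.mp hk)).ne'

lemma ae_M_zero (i : S) : ∀ᵐ ω ∂X.P i, X.M 0 ω = i := by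
  have hs : MeasurableSet {ω | X.M 0 ω = i} := X.measM 0 (measurableSet_singleton i)
  exact (ae_iff_measure_eq hs.nullMeasurableSet).mpr (by rw [X.start i, measure_univ])

lemma posPath_of_measure_cyl_ne_zero {γ : ℕ → S} {i : S} {n : ℕ} (h : X.P i (X.cyl γ n) ≠ 0) :
    γ 0 = i ∧ X.PosPath γ n := by
  have hγ : γ 0 = i := by
    by_contra hne
    refine h (measure_mono_null (fun ω hω => ?_) (ae_iff.mp (X.ae_M_zero i)))
    exact fun h0 => hne (X.mem_cyl.mp hω 0 (Nat.zero_le n) ▸ h0)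
  refine ⟨hγ, fun k hk => pos_iff_ne_zero.mpr fun hz => h ?_⟩
  rw [X.measure_cyl hγ]
  exact Finset.prod_eq_zero (Finset.mem_range.mpr hk) hz

lemma ae_pathLaw_of_ae {γ : ℕ → S} {i : S} (hγ : γ 0 = i) {n : ℕ} (hpos : X.PosPath γ n)
    {E : Set (Fin n → ℝ × ℝ)} (hE : MeasurableSet E)
    (h : ∀ᵐ ω ∂X.P i, ω ∈ X.cyl γ n → X.steps n ω ∈ E) : ∀ᵐ x ∂X.pathLaw γ n, x ∈ E := by
  have h0 : X.P i (X.cyl γ n ∩ X.steps n ⁻¹' Eᶜ) = 0 := by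
    refine measure_mono_null ?_ (ae_iff.mp h)
    exact fun ω hω himp => hω.2 (himp hω.1)
  rw [X.measure_cyl_inter_steps_preimage hγ hE.compl] at h0
  exact (mul_eq_zero.mp h0).resolve_left (X.measure_cyl_ne_zero hγ hpos)

lemma ae_of_ae_pathLaw {γ : ℕ → S} {i : S} (hγ : γ 0 = i) {n : ℕ}
    {E : Set (Fin n → ℝ × ℝ)} (hE : MeasurableSet E) (h : ∀ᵐ x ∂X.pathLaw γ n, x ∈ E) :
    ∀ᵐ ω ∂X.P i, ω ∈ X.cyl γ n → X.steps n ω ∈ E := by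
  have h0 : X.P i (X.cyl γ n ∩ X.steps n ⁻¹' Eᶜ) = 0 := by
    rw [X.measure_cyl_inter_steps_preimage hγ hE.compl,
      show X.pathLaw γ n Eᶜ = 0 from ae_iff.mp h, mul_zero]
  rw [ae_iff]
  refine measure_mono_null (fun ω hω => ?_) h0
  obtain ⟨hcyl, hE⟩ := Classical.not_imp.mp hω
  exact ⟨hcyl, hE⟩

/-- There are only countably many cylinders of length `n`, and those of probability zero are
negligible. -/
lemma ae_of_forall_cyl {i : S} {Q : Ω → Prop} (n : ℕ)
    (h : ∀ γ : ℕ → S, γ 0 = i → X.PosPath γ n → ∀ᵐ ω ∂X.P i, ω ∈ X.cyl γ n → Q ω) :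
    ∀ᵐ ω ∂X.P i, Q ω := by
  let path : (Fin (n + 1) → S) → ℕ → S := fun v k => if hk : k < n + 1 then v ⟨k, hk⟩ else i
  have hv : ∀ v, ∀ᵐ ω ∂X.P i, ω ∈ X.cyl (path v) n → Q ω := by
    intro v
    by_cases h0 : X.P i (X.cyl (path v) n) = 0
    · filter_upwards [measure_eq_zero_iff_ae_notMem.mp h0] with ω hω hcyl using absurd hcyl hω
    · obtain ⟨hγ, hpos⟩ := X.posPath_of_measure_cyl_ne_zero h0
      exact h _ hγ hpos
  filter_upwards [ae_all_iff.mpr hv] with ω hω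
  refine hω (fun k => X.M k ω) (X.mem_cyl.mpr fun k hk => ?_)
  simp only [path, dif_pos (Nat.lt_succ_of_le hk)]

lemma exists_posPath (i j : S) : ∃ n γ, γ 0 = i ∧ γ n = j ∧ X.PosPath γ n := by
  obtain ⟨n, hn⟩ := X.irreducible i j
  by_contra! h
  have hne : ∀ᵐ ω ∂X.P i, X.M n ω ≠ j := X.ae_of_forall_cyl n fun γ hγ hpos =>
    ae_of_all _ fun ω hω hM => h n γ hγ (X.mem_cyl.mp hω n le_rfl ▸ hM) hpos
  exact hn.ne' (by simpa using ae_iff.mp hne)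

lemma posPath_edgePath {j k : S} (h : 0 < X.p j k) : X.PosPath (edgePath j k) 1 := by
  intro t ht
  obtain rfl : t = 0 := by omega
  simpa [edgePath] using h

lemma posPath_pathAppend {ρ δ : ℕ → S} {m r : ℕ} (hρδ : ρ m = δ 0) (hρ : X.PosPath ρ m)
    (hδ : X.PosPath δ r) : X.PosPath (pathAppend ρ m δ) (m + r) := by
  intro k hk
  rcases lt_or_ge k m with hkm | hkm
  · rw [pathAppend_of_le hρδ hkm.le, pathAppend_of_le hρδ hkm]
    exact hρ k hkm
  · obtain ⟨t, rfl⟩ := Nat.exists_eq_add_of_le hkm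
    rw [pathAppend_add, add_assoc, pathAppend_add]
    exact hδ t (by omega)

lemma pathLaw_pathAppend {ρ δ : ℕ → S} {m : ℕ} (hρδ : ρ m = δ 0) :
    X.pathLaw (pathAppend ρ m δ) m = X.pathLaw ρ m := by
  unfold pathLaw
  congr 1
  funext k
  rw [pathAppend_of_le hρδ k.2.le, pathAppend_of_le hρδ k.2]

lemma ae_pathLaw_of_ae_K {γ : ℕ → S} {n : ℕ} (k : Fin n) {p : ℝ × ℝ → Prop}
    (h : ∀ᵐ v ∂X.K (γ k) (γ (k + 1)), p v) : ∀ᵐ x ∂X.pathLaw γ n, p (x k) :=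
  (measurePreserving_eval (fun k : Fin n => X.K (γ k) (γ (k + 1))) k).quasiMeasurePreserving.ae h

lemma ae_K_of_ae_pathLaw {γ : ℕ → S} {n : ℕ} (k : Fin n) {p : ℝ × ℝ → Prop}
    (hp : MeasurableSet {v | p v}) (h : ∀ᵐ x ∂X.pathLaw γ n, p (x k)) :
    ∀ᵐ v ∂X.K (γ k) (γ (k + 1)), p v := by
  rw [← (measurePreserving_eval (fun k : Fin n => X.K (γ k) (γ (k + 1))) k).map_eq]
  exact (ae_map_iff (measurable_pi_apply k).aemeasurable hp).mpr h

lemma measurePreserving_append_pathLaw (γ : ℕ → S) (m r : ℕ) :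
    MeasurePreserving (appendEquiv m r)
      ((X.pathLaw γ m).prod (X.pathLaw (fun k => γ (m + k)) r)) (X.pathLaw γ (m + r)) :=
  measurePreserving_appendEquiv (fun k => X.K (γ k) (γ (k + 1))) m r

lemma ae_prod_of_ae_pathLaw {γ : ℕ → S} {m r : ℕ} {p : (Fin (m + r) → ℝ × ℝ) → Prop}
    (h : ∀ᵐ z ∂X.pathLaw γ (m + r), p z) :
    ∀ᵐ q ∂(X.pathLaw γ m).prod (X.pathLaw (fun k => γ (m + k)) r), p (Fin.append q.1 q.2) := by
  simpa only [appendEquiv_apply] using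
    (X.measurePreserving_append_pathLaw γ m r).quasiMeasurePreserving.ae h

lemma ae_pathLaw_of_ae_prod {γ : ℕ → S} {m r : ℕ} {p : (Fin (m + r) → ℝ × ℝ) → Prop}
    (h : ∀ᵐ q ∂(X.pathLaw γ m).prod (X.pathLaw (fun k => γ (m + k)) r),
      p (Fin.append q.1 q.2)) :
    ∀ᵐ z ∂X.pathLaw γ (m + r), p z := by
  rw [← (X.measurePreserving_append_pathLaw γ m r).map_eq,
    (appendEquiv m r).measurableEmbedding.ae_map_iff]
  simpa only [appendEquiv_apply] using h

lemma measurable_tau_one (i : S) : Measurable (X.tau i 1) :=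
  measurable_sInf_setOf_nat fun k => (MeasurableSet.const (0 < k)).inter
    (X.measM k (measurableSet_singleton i))

lemma M_tau_one {i : S} {ω : Ω} (h : 0 < X.tau i 1 ω) : X.M (X.tau i 1 ω) ω = i :=
  (Nat.sInf_mem (Nat.nonempty_of_pos_sInf h)).2

lemma tau_one_eq_of_mem_cyl {i : S} {γ : ℕ → S} {n : ℕ} {ω : Ω} (hω : ω ∈ X.cyl γ n)
    (hn : 0 < n) (hγn : γ n = i) (hfirst : ∀ k, 0 < k → k < n → γ k ≠ i) :
    X.tau i 1 ω = n := by
  have hM := X.mem_cyl.mp hω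
  refine le_antisymm (Nat.sInf_le ⟨hn, (hM n le_rfl).trans hγn⟩) (le_csInf ⟨n, hn, ?_⟩ ?_)
  · exact (hM n le_rfl).trans hγn
  · rintro k ⟨hk, hMk⟩
    by_contra! hkn
    exact hfirst k hk hkn ((hM k hkn.le).symm.trans hMk)

lemma ae_tau_one_pos (i : S) : ∀ᵐ ω ∂X.P i, 0 < X.tau i 1 ω := by
  have hs : MeasurableSet {ω | ∃ n, 0 < n ∧ X.M n ω = i} := by
    simp only [Set.ofPred_exists]
    exact .iUnion fun n => (MeasurableSet.const (0 < n)).inter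
      (X.measM n (measurableSet_singleton i))
  have hret : ∀ᵐ ω ∂X.P i, ∃ n, 0 < n ∧ X.M n ω = i :=
    (ae_iff_measure_eq hs.nullMeasurableSet).mpr (by rw [X.recurrent i, measure_univ])
  filter_upwards [hret] with ω hω
  exact (Nat.sInf_mem hω).1

lemma Pprod_eq_tupleProd (n : ℕ) (ω : Ω) : X.Pprod n ω = tupleProd n (X.steps n ω) :=
  show partialProd n (fun k => (X.A k ω, X.B k ω)) = _ from
    partialProd_congr fun _ hk => (extendTuple_of_lt (X.steps n ω) hk).symm

lemma Ssum_eq_tuplePerp (n : ℕ) (ω : Ω) : X.Ssum n ω = tuplePerp n (X.steps n ω) :=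
  show partialPerp n (fun k => (X.A k ω, X.B k ω)) = _ from
    partialPerp_congr fun _ hk => (extendTuple_of_lt (X.steps n ω) hk).symm

lemma measurable_Bi (i : S) : Measurable (X.Bi i) := by
  have : Measurable fun q : ℕ × Ω => X.Ssum q.1 q.2 :=
    measurable_from_prod_countable_right fun n =>
      show Measurable (X.Ssum n) from Finset.measurable_sum _ fun k _ =>
        (show Measurable (X.Pprod k) from Finset.measurable_prod _ fun l _ => X.measA l).mul
          (X.measB k)
  exact this.comp ((X.measurable_tau_one i).prodMk measurable_id)

lemma ae_pathLaw_of_ae_cycle {i : S} {F : ∀ n, (Fin n → ℝ × ℝ) → ℝ} (hF : ∀ n, Measurable (F n))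
    {r : ℝ} (h : ∀ᵐ ω ∂X.P i, F (X.tau i 1 ω) (X.steps _ ω) = r) {γ : ℕ → S} {n : ℕ}
    (hγ0 : γ 0 = i) (hγn : γ n = i) (hn : 0 < n) (hfirst : ∀ k, 0 < k → k < n → γ k ≠ i)
    (hpos : X.PosPath γ n) : ∀ᵐ x ∂X.pathLaw γ n, F n x = r := by
  refine X.ae_pathLaw_of_ae hγ0 hpos (hF n (measurableSet_singleton r)) ?_
  filter_upwards [h] with ω hω hcyl
  rwa [X.tau_one_eq_of_mem_cyl hcyl hn hγn hfirst] at hω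

lemma ae_cycle_of_ae_pathLaw {i : S} {F : ∀ n, (Fin n → ℝ × ℝ) → ℝ} (hF : ∀ n, Measurable (F n))
    {r : ℝ} (h : ∀ n γ, γ 0 = i → γ n = i → X.PosPath γ n → ∀ᵐ x ∂X.pathLaw γ n, F n x = r) :
    ∀ᵐ ω ∂X.P i, F (X.tau i 1 ω) (X.steps _ ω) = r := by
  have hn : ∀ n, ∀ᵐ ω ∂X.P i, X.tau i 1 ω = n → F n (X.steps n ω) = r := fun n =>
    X.ae_of_forall_cyl n fun γ hγ0 hpos => by
      by_cases hγn : γ n = i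
      · filter_upwards [X.ae_of_ae_pathLaw hγ0 (hF n (measurableSet_singleton r))
          (h n γ hγ0 hγn hpos)] with ω hω hcyl _ using hω hcyl
      · filter_upwards [X.ae_tau_one_pos i] with ω hτ hcyl rfl
        exact absurd ((X.mem_cyl.mp hcyl _ le_rfl).symm.trans (X.M_tau_one hτ)) hγn
  filter_upwards [ae_all_iff.mpr hn] with ω hω using hω _ rfl

lemma ae_Pπ_iff {p : Ω → Prop} : (∀ᵐ ω ∂X.Pπ, p ω) ↔ ∀ i, ∀ᵐ ω ∂X.P i, p ω := by
  rw [Pπ, Measure.ae_sum_iff]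
  exact forall_congr' fun i => ⟨fun h => (Measure.absolutelyContinuous_smul (X.πpos i).ne').ae_le h,
    fun h => Measure.ae_smul_measure h _⟩

instance : IsProbabilityMeasure X.Pπ := by
  constructor
  simp [Pπ, X.πsum]

lemma ae_K_fst_ne_zero (hA : X.Pπ {ω | X.A 0 ω = 0} = 0) {j k : S} (hjk : 0 < X.p j k) :
    ∀ᵐ v ∂X.K j k, v.1 ≠ 0 := by
  have hAj : ∀ᵐ ω ∂X.P j, X.A 0 ω ≠ 0 := X.ae_Pπ_iff.mp (measure_eq_zero_iff_ae_notMem.mp hA) j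
  have h := X.ae_pathLaw_of_ae (γ := edgePath j k) rfl (X.posPath_edgePath hjk) (n := 1)
    (E := {x | (x 0).1 ≠ 0}) (measurableSet_eq_fun (by fun_prop) measurable_const).compl
    (by filter_upwards [hAj] with ω hω _ using hω)
  exact X.ae_K_of_ae_pathLaw (γ := edgePath j k) 0
    (measurable_fst (measurableSet_singleton 0)).compl h

lemma ae_tupleProd_ne_zero (hA : X.Pπ {ω | X.A 0 ω = 0} = 0) {γ : ℕ → S} {n : ℕ}
    (hpos : X.PosPath γ n) : ∀ᵐ x ∂X.pathLaw γ n, tupleProd n x ≠ 0 := by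
  have h : ∀ k : Fin n, ∀ᵐ x ∂X.pathLaw γ n, (x k).1 ≠ 0 := fun k =>
    X.ae_pathLaw_of_ae_K k (X.ae_K_fst_ne_zero hA (hpos k k.2))
  filter_upwards [ae_all_iff.mpr h] with x hx
  rw [tupleProd, partialProd, Finset.prod_ne_zero_iff]
  intro k hk
  rw [extendTuple_of_lt _ (Finset.mem_range.mp hk)]
  exact hx _

/-- Splitting a cycle at its first return reduces it to a first-return cycle and a shorter cycle. -/
lemma ae_tuplePerp_cycle_eq_zero {b : S} (hB : ∀ᵐ ω ∂X.P b, X.Bi b ω = 0) (n : ℕ) :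
    ∀ γ : ℕ → S, γ 0 = b → γ n = b → X.PosPath γ n →
      ∀ᵐ x ∂X.pathLaw γ n, tuplePerp n x = 0 := by
  induction n using Nat.strong_induction_on with
  | _ n ih =>
  intro γ hγ0 hγn hpos
  rcases Nat.eq_zero_or_pos n with rfl | hn
  · exact ae_of_all _ tuplePerp_zero
  have hret : {k | 0 < k ∧ γ k = b}.Nonempty := ⟨n, hn, hγn⟩
  set m := sInf {k | 0 < k ∧ γ k = b}
  obtain ⟨hm, hγm⟩ : 0 < m ∧ γ m = b := Nat.sInf_mem hret
  obtain ⟨r, rfl⟩ := Nat.exists_eq_add_of_le (Nat.sInf_le ⟨hn, hγn⟩ : m ≤ n)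
  have hfirst : ∀ᵐ x ∂X.pathLaw γ m, tuplePerp m x = 0 := by
    refine X.ae_pathLaw_of_ae_cycle measurable_tuplePerp ?_ hγ0 hγm hm
      (fun k hk hkm hγk => Nat.notMem_of_lt_sInf hkm ⟨hk, hγk⟩) fun k hk => hpos k (by omega)
    filter_upwards [hB] with ω hω
    rwa [Bi, Ssum_eq_tuplePerp] at hω
  have hrest : ∀ᵐ y ∂X.pathLaw (fun k => γ (m + k)) r, tuplePerp r y = 0 :=
    ih r (by omega) _ hγm hγn fun k hk => hpos (m + k) (by omega)
  refine X.ae_pathLaw_of_ae_prod ?_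
  filter_upwards [Measure.quasiMeasurePreserving_fst.ae hfirst,
    Measure.quasiMeasurePreserving_snd.ae hrest] with q h1 h2
  rw [tuplePerp_append, h1, h2, mul_zero, add_zero]

/-- Prefixing a fixed path from `b` to `j` turns a path from `j` to `b` into a cycle at `b`; the
two pieces are independent, so the increment of the second one is a.s. constant. -/
lemma exists_ae_tuplePerp_eq_const (hA : X.Pπ {ω | X.A 0 ω = 0} = 0) {b : S}
    (hcyc : ∀ n γ, γ 0 = b → γ n = b → X.PosPath γ n → ∀ᵐ x ∂X.pathLaw γ n, tuplePerp n x = 0)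
    (j : S) : ∃ r : ℝ, ∀ n γ, γ 0 = j → γ n = b → X.PosPath γ n →
      ∀ᵐ x ∂X.pathLaw γ n, tuplePerp n x = r := by
  obtain ⟨m, ρ, hρ0, hρm, hρ⟩ := X.exists_posPath b j
  let F : (Fin m → ℝ × ℝ) → ℝ := fun x => -tuplePerp m x / tupleProd m x
  have hsplit : ∀ n γ, γ 0 = j → γ n = b → X.PosPath γ n →
      ∀ᵐ q ∂(X.pathLaw ρ m).prod (X.pathLaw γ n), tuplePerp n q.2 = F q.1 := by
    intro n γ hγ0 hγn hγ
    have hργ : ρ m = γ 0 := hρm.trans hγ0.symm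
    have h := X.ae_prod_of_ae_pathLaw (hcyc (m + n) (pathAppend ρ m γ)
      (by rw [pathAppend_of_le hργ (Nat.zero_le m), hρ0]) (by rw [pathAppend_add, hγn])
      (X.posPath_pathAppend hργ hρ hγ))
    rw [X.pathLaw_pathAppend hργ, funext (pathAppend_add ρ m γ)] at h
    filter_upwards [h, Measure.quasiMeasurePreserving_fst.ae (X.ae_tupleProd_ne_zero hA hρ)]
      with q hq hne
    rw [tuplePerp_append] at hq
    simp only [F]
    field_simp
    linear_combination hq
  obtain ⟨n₀, δ, hδ0, hδn, hδ⟩ := X.exists_posPath j b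
  obtain ⟨r, hr, -⟩ := exists_ae_eq_const_of_ae_prod (f := F) (g := tuplePerp n₀)
    (hsplit n₀ δ hδ0 hδn hδ)
  refine ⟨r, fun n γ hγ0 hγn hγ => ?_⟩
  obtain ⟨r', hr', hγr'⟩ := exists_ae_eq_const_of_ae_prod (f := F) (g := tuplePerp n)
    (hsplit n γ hγ0 hγn hγ)
  obtain ⟨x, hxr, hxr'⟩ := (hr.and hr').exists
  rwa [← hxr', hxr] at hγr'

/-- The degeneracy condition (D), stated on the kernels transition by transition. -/
def DegenKernel (c : S → ℝ) : Prop :=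
  ∀ j k, 0 < X.p j k → ∀ᵐ v ∂X.K j k, v.1 * c k + v.2 = c j

lemma degenKernel_of_ae_tuplePerp {b : S} {c : S → ℝ}
    (hc : ∀ j n γ, γ 0 = j → γ n = b → X.PosPath γ n → ∀ᵐ x ∂X.pathLaw γ n, tuplePerp n x = c j) :
    X.DegenKernel c := by
  intro j k hjk
  obtain ⟨n, δ, hδ0, hδn, hδ⟩ := X.exists_posPath k b
  have hkδ : edgePath j k 1 = δ 0 := hδ0.symm
  have h := X.ae_prod_of_ae_pathLaw (hc j (1 + n) (pathAppend (edgePath j k) 1 δ)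
    (by rw [pathAppend_of_le hkδ (Nat.zero_le 1)]; rfl) (by rw [pathAppend_add, hδn])
    (X.posPath_pathAppend hkδ (X.posPath_edgePath hjk) hδ))
  rw [X.pathLaw_pathAppend hkδ, funext (pathAppend_add (edgePath j k) 1 δ)] at h
  have h1 : ∀ᵐ x ∂X.pathLaw (edgePath j k) 1, (x 0).1 * c k + (x 0).2 = c j := by
    refine ae_of_ae_prod_fst (ν := X.pathLaw δ n) ?_
    filter_upwards [h, Measure.quasiMeasurePreserving_snd.ae (hc k n δ hδ0 hδn hδ)] with q hq hk
    rw [tuplePerp_append, tuplePerp_one, tupleProd_one, hk] at hq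
    linear_combination hq
  exact X.ae_K_of_ae_pathLaw (γ := edgePath j k) (p := fun v => v.1 * c k + v.2 = c j) 0
    (measurableSet_eq_fun (by fun_prop) measurable_const) h1

lemma exists_degenKernel (hA : X.Pπ {ω | X.A 0 ω = 0} = 0) {b : S}
    (hB : X.P b {ω | X.Bi b ω = 0} = 1) : ∃ c : S → ℝ, c b = 0 ∧ X.DegenKernel c := by
  have hs : MeasurableSet {ω | X.Bi b ω = 0} := X.measurable_Bi b (measurableSet_singleton 0)
  have hB' : ∀ᵐ ω ∂X.P b, X.Bi b ω = 0 :=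
    (ae_iff_measure_eq hs.nullMeasurableSet).mpr (by rw [hB, measure_univ])
  choose c hc using X.exists_ae_tuplePerp_eq_const hA (X.ae_tuplePerp_cycle_eq_zero hB')
  refine ⟨c, ?_, X.degenKernel_of_ae_tuplePerp hc⟩
  obtain ⟨x, hx⟩ := (hc b 0 (fun _ => b) rfl rfl fun k hk => absurd hk k.not_lt_zero).exists
  simpa using hx.symm

lemma ae_tuplePerp_add_of_degenKernel {c : S → ℝ} (hc : X.DegenKernel c) (n : ℕ) :
    ∀ γ : ℕ → S, X.PosPath γ n →
      ∀ᵐ x ∂X.pathLaw γ n, tuplePerp n x + tupleProd n x * c (γ n) = c (γ 0) := by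
  induction n with
  | zero => exact fun γ _ => ae_of_all _ fun x => by simp
  | succ n ih =>
    intro γ hγ
    have hlast : ∀ᵐ y ∂X.pathLaw (fun k => γ (n + k)) 1,
        (y 0).1 * c (γ (n + 1)) + (y 0).2 = c (γ n) :=
      X.ae_pathLaw_of_ae_K 0 (hc _ _ (hγ n n.lt_succ_self))
    refine X.ae_pathLaw_of_ae_prod (m := n) (r := 1) ?_
    filter_upwards [Measure.quasiMeasurePreserving_fst.ae (ih γ fun k hk => hγ k (by omega)),
      Measure.quasiMeasurePreserving_snd.ae hlast] with q h1 h2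
    rw [tuplePerp_append, tupleProd_append, tuplePerp_one, tupleProd_one]
    linear_combination h1 + tupleProd n q.1 * h2

lemma degenD_of_degenKernel {c : S → ℝ} (hc : X.DegenKernel c) : X.DegenD c := by
  refine X.ae_Pπ_iff.mpr fun i => X.ae_of_forall_cyl 1 fun γ hγ0 hγ => ?_
  have h := X.ae_of_ae_pathLaw hγ0 (n := 1) (E := {x | (x 0).1 * c (γ 1) + (x 0).2 = c (γ 0)})
    (measurableSet_eq_fun (by fun_prop) measurable_const)
    (X.ae_pathLaw_of_ae_K (p := fun v => v.1 * c (γ 1) + v.2 = c (γ 0)) 0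
      (hc (γ 0) (γ 1) (hγ 0 one_pos)))
  filter_upwards [h] with ω hω hcyl
  have hM := X.mem_cyl.mp hcyl
  rw [hM 0 (Nat.zero_le 1), hM 1 le_rfl]
  exact hω hcyl

/-- The difference `e = c - c'` of two solutions of (D) solves `A e_{M_1} = e_{M_0}`; it vanishes
nowhere, so the product of the `A`s along a cycle is `1`. -/
lemma ae_Ai_eq_one (hA : X.Pπ {ω | X.A 0 ω = 0} = 0) {c c' : S → ℝ} (hc : X.DegenKernel c)
    (hc' : X.DegenKernel c') {l : S} (hl : c' l = 0) (hcl : c l ≠ 0) (i : S) :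
    ∀ᵐ ω ∂X.P i, X.Ai i ω = 1 := by
  have he : ∀ n γ, X.PosPath γ n →
      ∀ᵐ x ∂X.pathLaw γ n, tupleProd n x * (c (γ n) - c' (γ n)) = c (γ 0) - c' (γ 0) :=
    fun n γ hγ => by
      filter_upwards [X.ae_tuplePerp_add_of_degenKernel hc n γ hγ,
        X.ae_tuplePerp_add_of_degenKernel hc' n γ hγ] with x h h'
      linear_combination h - h'
  have hei : c i - c' i ≠ 0 := by
    obtain ⟨n, ρ, hρ0, hρn, hρ⟩ := X.exists_posPath i l
    obtain ⟨x, hx, hne⟩ := ((he n ρ hρ).and (X.ae_tupleProd_ne_zero hA hρ)).exists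
    rw [hρ0, hρn, hl, sub_zero] at hx
    exact hx ▸ mul_ne_zero hne hcl
  have hcyc := X.ae_cycle_of_ae_pathLaw measurable_tupleProd (r := 1) fun n γ hγ0 hγn hγ => by
    filter_upwards [he n γ hγ] with x hx
    rw [hγ0, hγn] at hx
    exact (mul_eq_right₀ hei).mp hx
  filter_upwards [hcyc] with ω hω
  rwa [Ai, Pprod_eq_tupleProd]

end MMSetting

theorem vanishing_cycle_increments_general
    {S : Type*} [MeasurableSpace S] [MeasurableSingletonClass S] [Countable S]
    {Ω : Type*} [MeasurableSpace Ω] (X : MMSetting S Ω)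
    (hA : X.Pπ {ω | X.A 0 ω = 0} = 0) :
    ((∃ i : S, X.P i {ω | X.Bi i ω = 0} = 1) → ∃ c : S → ℝ, X.DegenD c) ∧
      ((∀ i : S, X.P i {ω | X.Bi i ω = 0} = 1) →
        X.Pπ {ω | X.B 0 ω = 0} = 1 ∨ ∀ i : S, X.P i {ω | X.Ai i ω = 1} = 1) := by
  refine ⟨fun ⟨b, hB⟩ => ?_, fun hB => ?_⟩
  · obtain ⟨c, -, hc⟩ := X.exists_degenKernel hA hB
    exact ⟨c, X.degenD_of_degenKernel hc⟩
  obtain ⟨b⟩ := X.nonempty_state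
  obtain ⟨c, -, hc⟩ := X.exists_degenKernel hA (hB b)
  by_cases hc0 : ∀ j, c j = 0
  · left
    rw [measure_congr (eventuallyEq_univ.mpr ?_), measure_univ]
    filter_upwards [X.degenD_of_degenKernel hc] with ω hω
    simpa [hc0] using hω
  · right
    obtain ⟨l, hl⟩ := not_forall.mp hc0
    obtain ⟨c', hc'l, hc'⟩ := X.exists_degenKernel hA (hB l)
    intro i
    rw [measure_congr (eventuallyEq_univ.mpr (X.ae_Ai_eq_one hA hc hc' hc'l hl i)), measure_univ]

/-- **Lemma 4.7**. In the Markov-modulated setting with `|S| > 1`, suppose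
`P_π(A_1 = 0) = 0`. Then: (a) if `P_i(B_1^i = 0) = 1` for some `i ∈ S`, the degeneracy
condition (D) holds; (b) if `P_i(B_1^i = 0) = 1` for all `i ∈ S`, then `P_π(B_1 = 0) = 1`
or `P_i(A_1^i = 1) = 1` for all `i ∈ S`. -/
theorem vanishing_cycle_increments
    {S : Type*} [MeasurableSpace S] [MeasurableSingletonClass S] [Countable S] [Nontrivial S]
    {Ω : Type*} [MeasurableSpace Ω] (X : MMSetting S Ω)
    (hA : X.Pπ {ω | X.A 0 ω = 0} = 0) :
    ((∃ i : S, X.P i {ω | X.Bi i ω = 0} = 1) → ∃ c : S → ℝ, X.DegenD c) ∧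
      ((∀ i : S, X.P i {ω | X.Bi i ω = 0} = 1) →
        X.Pπ {ω | X.B 0 ω = 0} = 1 ∨ ∀ i : S, X.P i {ω | X.Ai i ω = 1} = 1) :=
  vanishing_cycle_increments_general X hA

end Perpetuities
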